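/- Let μ ∈ (0, 1/2) and let M be the 2×2 matrix with rows (−1, 1) and (−μ(1−μ), −2), with eigenvectors p = (1, −μ) and q = (1, μ−1) for the eigenvalues −1−μ and μ−2. Suppose Y = (Y₁, Y₂) : [0,∞) → ℝ² is continuously differentiable, Y(s) ≠ 0 for all s, |Y(s)| → 0 as s → ∞, |Y'(s) − M·Y(s)| ≤ K|Y(s)|² for all s ≥ 0 and some K > 0, and in addition Y₂(s) < 0 and Y₂(s) > −Y₁(s)/2 for all s ≥ 0. Then the coefficient a in the asymptotic expansion |Y(s) − a·e^{−(1+μ)s}·p − b·e^{(μ−2)s}·q| ≤ C·e^{−2(1+μ)s} is strictly positive. -/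

import Mathlib

/-!
Let `α`, `β` be the coordinates of `Y` along the eigenvectors `p`, `q` (scaled by `1 - 2μ`).
Each solves its linear equation up to an error `O(‖Y‖²)`, and in the trapping region
`‖Y‖ ≤ 3 α / (1 - 2μ)`, so the error is `O(α²)`; in particular `α > 0`. Then
`g = e^{-(1+μ)s} / α` has derivative `O(e^{-(1+μ)s})`, so it converges exponentially fast to
some `ℓ`, and evaluating at a time where `α` is already small shows `ℓ > 0`. Hence
`α = ℓ⁻¹ e^{-(1+μ)s} + O(e^{-2(1+μ)s})`, i.e. `a = ℓ⁻¹ / (1 - 2μ) > 0`. Finally `β` solves its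
linear equation with forcing `O(α²) = O(e^{-2(1+μ)s})`, which yields the `q`-term because
`μ - 2 > -2(1+μ)`.
-/

open scoped Topology

/-- The action of the matrix `M = [[-1, 1], [-μ(1-μ), -2]]` on a vector of `ℝ²`. -/
noncomputable def Mmul (μ : ℝ) (v : EuclideanSpace ℝ (Fin 2)) : EuclideanSpace ℝ (Fin 2) :=
  (EuclideanSpace.equiv (Fin 2) ℝ).symm ![-v 0 + v 1, -(μ * (1 - μ)) * v 0 - 2 * v 1]

/-- The eigenvector `p = (1, -μ)` of `M` for the eigenvalue `-1-μ`. -/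
noncomputable def pvec (μ : ℝ) : EuclideanSpace ℝ (Fin 2) :=
  (EuclideanSpace.equiv (Fin 2) ℝ).symm ![1, -μ]

/-- The eigenvector `q = (1, μ-1)` of `M` for the eigenvalue `μ-2`. -/
noncomputable def qvec (μ : ℝ) : EuclideanSpace ℝ (Fin 2) :=
  (EuclideanSpace.equiv (Fin 2) ℝ).symm ![1, μ - 1]

open Set Filter Real

theorem exists_forall_le_le_of_monotoneOn_of_antitoneOn {α β : Type*} [LinearOrder α]
    [ConditionallyCompleteLattice β] {S : Set α} (hS : S.Nonempty) {F G : α → β}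
    (hF : MonotoneOn F S) (hG : AntitoneOn G S) (hFG : ∀ x ∈ S, F x ≤ G x) :
    ∃ ℓ, ∀ x ∈ S, F x ≤ ℓ ∧ ℓ ≤ G x := by
  obtain ⟨ℓ, hFℓ, hℓG⟩ := exists_between_of_forall_le (hS.image F) (hS.image G) <| by
    rintro _ ⟨x, hx, rfl⟩ _ ⟨y, hy, rfl⟩
    rcases le_total x y with hxy | hyx
    · exact (hF hx hy hxy).trans (hFG y hy)
    · exact (hFG x hx).trans (hG hy hx hyx)
  exact ⟨ℓ, fun x hx => ⟨hFℓ (mem_image_of_mem F hx), hℓG (mem_image_of_mem G hx)⟩⟩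

theorem hasDerivAt_exp_const_mul (r s : ℝ) :
    HasDerivAt (fun t => exp (r * t)) (r * exp (r * s)) s := by
  simpa [mul_comm] using ((hasDerivAt_id s).const_mul r).exp

theorem tendsto_const_mul_exp_neg_mul_atTop (D : ℝ) {ν : ℝ} (hν : 0 < ν) :
    Tendsto (fun s => D * exp (-ν * s)) atTop (𝓝 0) := by
  simpa using (tendsto_exp_atBot.comp
    (tendsto_id.const_mul_atTop_of_neg (neg_neg_of_pos hν))).const_mul D

theorem exists_abs_sub_le_of_abs_deriv_le_exp {f f' : ℝ → ℝ} {ρ A : ℝ} (hρ : 0 < ρ)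
    (hf : ∀ s ≥ 0, HasDerivWithinAt f (f' s) (Ici 0) s)
    (hf' : ∀ s ≥ 0, |f' s| ≤ A * exp (-ρ * s)) :
    ∃ ℓ, ∀ s ≥ 0, |f s - ℓ| ≤ A / ρ * exp (-ρ * s) := by
  set ε : ℝ → ℝ := fun s => A / ρ * exp (-ρ * s)
  have hA : 0 ≤ A := by simpa using (abs_nonneg _).trans (hf' 0 le_rfl)
  have hε (s : ℝ) : HasDerivAt ε (-(A * exp (-ρ * s))) s :=
    ((hasDerivAt_exp_const_mul (-ρ) s).const_mul (A / ρ)).congr_deriv (by field_simp)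
  have hf_int (s : ℝ) (hs : s ∈ interior (Ici (0 : ℝ))) : HasDerivAt f (f' s) s := by
    rw [interior_Ici] at hs
    exact (hf s hs.le).hasDerivAt (Ici_mem_nhds hs)
  have hf'_bound (s : ℝ) (hs : s ∈ interior (Ici (0 : ℝ))) :=
    abs_le.1 (hf' s (interior_subset hs : s ∈ Ici 0))
  have hcont : ContinuousOn f (Ici 0) := fun s hs => (hf s hs).continuousWithinAt
  have hmono : MonotoneOn (fun s => f s - ε s) (Ici 0) :=
    monotoneOn_of_hasDerivWithinAt_nonneg (convex_Ici 0)
      (hcont.sub fun s _ => (hε s).continuousAt.continuousWithinAt)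
      (fun s hs => ((hf_int s hs).sub (hε s)).hasDerivWithinAt)
      (fun s hs => by linarith [(hf'_bound s hs).1])
  have hanti : AntitoneOn (fun s => f s + ε s) (Ici 0) :=
    antitoneOn_of_hasDerivWithinAt_nonpos (convex_Ici 0)
      (hcont.add fun s _ => (hε s).continuousAt.continuousWithinAt)
      (fun s hs => ((hf_int s hs).add (hε s)).hasDerivWithinAt)
      (fun s hs => by linarith [(hf'_bound s hs).2])
  obtain ⟨ℓ, hℓ⟩ := exists_forall_le_le_of_monotoneOn_of_antitoneOn nonempty_Ici hmono hanti
    fun s _ => by linarith [show 0 ≤ ε s by positivity]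
  exact ⟨ℓ, fun s hs =>
    abs_sub_le_iff.2 ⟨by linarith [(hℓ s hs).1], by linarith [(hℓ s hs).2]⟩⟩

theorem exists_abs_sub_mul_exp_le_of_abs_deriv_sub_le {β β' : ℝ → ℝ} {r κ A : ℝ}
    (hrκ : 0 < r + κ) (hβ : ∀ s ≥ 0, HasDerivWithinAt β (β' s) (Ici 0) s)
    (hβ' : ∀ s ≥ 0, |β' s - r * β s| ≤ A * exp (-κ * s)) :
    ∃ b, ∀ s ≥ 0, |β s - b * exp (r * s)| ≤ A / (r + κ) * exp (-κ * s) := by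
  have hv (s : ℝ) (hs : s ≥ 0) : HasDerivWithinAt (fun t => exp (-r * t) * β t)
      (exp (-r * s) * (β' s - r * β s)) (Ici 0) s :=
    ((hasDerivAt_exp_const_mul (-r) s).hasDerivWithinAt.mul (hβ s hs)).congr_deriv (by ring)
  have hv' (s : ℝ) (hs : s ≥ 0) :
      |exp (-r * s) * (β' s - r * β s)| ≤ A * exp (-(r + κ) * s) := by
    rw [abs_mul, abs_of_pos (exp_pos _), show -(r + κ) * s = -r * s + -κ * s by ring,
      exp_add, mul_left_comm]
    exact mul_le_mul_of_nonneg_left (hβ' s hs) (exp_pos _).le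
  obtain ⟨b, hb⟩ := exists_abs_sub_le_of_abs_deriv_le_exp hrκ hv hv'
  refine ⟨b, fun s hs => ?_⟩
  have hβ_eq : β s - b * exp (r * s) = exp (r * s) * (exp (-r * s) * β s - b) := by
    rw [mul_sub, ← mul_assoc, ← exp_add]; simp [mul_comm]
  calc |β s - b * exp (r * s)| = exp (r * s) * |exp (-r * s) * β s - b| := by
        rw [hβ_eq, abs_mul, abs_of_pos (exp_pos _)]
    _ ≤ exp (r * s) * (A / (r + κ) * exp (-(r + κ) * s)) :=
        mul_le_mul_of_nonneg_left (hb s hs) (exp_pos _).le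
    _ = A / (r + κ) * exp (-κ * s) := by
        rw [mul_left_comm, ← exp_add]; ring_nf

theorem exists_pos_le_of_continuousOn_Ici {g : ℝ → ℝ} {a c : ℝ} (hg : ContinuousOn g (Ici a))
    (hpos : ∀ s ≥ a, 0 < g s) (hc : 0 < c) (hev : ∀ᶠ s in atTop, c ≤ g s) :
    ∃ m > 0, ∀ s ≥ a, m ≤ g s := by
  obtain ⟨s₁, hs₁⟩ := eventually_atTop.1 hev
  obtain ⟨x, hx, hmin⟩ := isCompact_Icc.exists_isMinOn (nonempty_Icc.2 (le_max_left a s₁))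
    (hg.mono Icc_subset_Ici_self)
  refine ⟨min (g x) c, lt_min (hpos x hx.1) hc, fun s hs => ?_⟩
  rcases le_total s (max a s₁) with h | h
  · exact (min_le_left _ _).trans (hmin ⟨hs, h⟩)
  · exact (min_le_right _ _).trans (hs₁ s ((le_max_right _ _).trans h))

theorem exists_abs_inv_sub_inv_le {g : ℝ → ℝ} {ℓ D ν : ℝ} (hν : 0 < ν)
    (hg : ContinuousOn g (Ici 0)) (hpos : ∀ s ≥ 0, 0 < g s) (hℓ : 0 < ℓ)
    (hgℓ : ∀ s ≥ 0, |g s - ℓ| ≤ D * exp (-ν * s)) :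
    ∃ C, ∀ s ≥ 0, |(g s)⁻¹ - ℓ⁻¹| ≤ C * exp (-ν * s) := by
  obtain ⟨m, hm, hgm⟩ := exists_pos_le_of_continuousOn_Ici hg hpos (half_pos hℓ) <| by
    filter_upwards [(tendsto_const_mul_exp_neg_mul_atTop D hν).eventually
      (gt_mem_nhds (half_pos hℓ)), eventually_ge_atTop 0] with s hs hs₀
    linarith [(abs_sub_le_iff.1 (hgℓ s hs₀)).2]
  refine ⟨D / (m * ℓ), fun s hs => ?_⟩
  have hgs := hpos s hs
  calc |(g s)⁻¹ - ℓ⁻¹| = |g s - ℓ| / (g s * ℓ) := by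
        rw [inv_sub_inv hgs.ne' hℓ.ne', abs_div, abs_sub_comm, abs_of_pos (mul_pos hgs hℓ)]
    _ ≤ D * exp (-ν * s) / (m * ℓ) :=
        div_le_div₀ ((abs_nonneg _).trans (hgℓ s hs)) (hgℓ s hs) (by positivity)
          (mul_le_mul_of_nonneg_right (hgm s hs) hℓ.le)
    _ = D / (m * ℓ) * exp (-ν * s) := by ring

theorem exists_pos_abs_sub_mul_exp_le_of_abs_deriv_add_le_sq {α α' : ℝ → ℝ} {ν L : ℝ}
    (hν : 0 < ν) (hα : ∀ s ≥ 0, HasDerivWithinAt α (α' s) (Ici 0) s)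
    (hpos : ∀ s ≥ 0, 0 < α s) (hlim : Tendsto α atTop (𝓝 0))
    (hα' : ∀ s ≥ 0, |α' s + ν * α s| ≤ L * α s ^ 2) :
    ∃ a C, 0 < a ∧ ∀ s ≥ 0, |α s - a * exp (-ν * s)| ≤ C * exp (-2 * ν * s) := by
  -- `g = e^{-νs} / α` turns the Riccati-type equation into `|g'| ≤ L e^{-νs}`
  set g : ℝ → ℝ := fun s => exp (-ν * s) / α s
  have hg (s : ℝ) (hs : s ≥ 0) : HasDerivWithinAt g
      (-(exp (-ν * s) * (α' s + ν * α s)) / α s ^ 2) (Ici 0) s :=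
    ((hasDerivAt_exp_const_mul (-ν) s).hasDerivWithinAt.div (hα s hs)
      (hpos s hs).ne').congr_deriv (by ring)
  have hg' (s : ℝ) (hs : s ≥ 0) :
      |-(exp (-ν * s) * (α' s + ν * α s)) / α s ^ 2| ≤ L * exp (-ν * s) := by
    have hα2 : 0 < α s ^ 2 := pow_pos (hpos s hs) 2
    rw [abs_div, abs_neg, abs_mul, abs_of_pos (exp_pos _), abs_of_pos hα2, div_le_iff₀ hα2]
    nlinarith [hα' s hs, exp_pos (-ν * s)]
  obtain ⟨ℓ, hℓ⟩ := exists_abs_sub_le_of_abs_deriv_le_exp hν hg hg'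
  -- at a time `s₀` with `L α s₀ < ν`, `g s₀` already exceeds the total drift `L/ν e^{-νs₀}`
  have hℓ_pos : 0 < ℓ := by
    obtain ⟨s₀, hs₀, hsmall⟩ := ((eventually_ge_atTop 0).and
      ((hlim.const_mul L).eventually (gt_mem_nhds (by simpa using hν)))).exists
    have : L / ν * exp (-ν * s₀) < g s₀ := by
      rw [div_mul_eq_mul_div, div_lt_div_iff₀ hν (hpos s₀ hs₀)]
      nlinarith [exp_pos (-ν * s₀)]
    linarith [(abs_sub_le_iff.1 (hℓ s₀ hs₀)).1]
  obtain ⟨C, hC⟩ := exists_abs_inv_sub_inv_le hν (fun s hs => (hg s hs).continuousWithinAt)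
    (fun s hs => div_pos (exp_pos _) (hpos s hs)) hℓ_pos hℓ
  refine ⟨ℓ⁻¹, C, inv_pos.2 hℓ_pos, fun s hs => ?_⟩
  have hα_eq : α s - ℓ⁻¹ * exp (-ν * s) = exp (-ν * s) * ((g s)⁻¹ - ℓ⁻¹) := by
    simp only [g, inv_div]; field_simp
  rw [hα_eq, abs_mul, abs_of_pos (exp_pos _), show -2 * ν * s = -ν * s + -ν * s by ring,
    exp_add, mul_left_comm]
  exact mul_le_mul_of_nonneg_left (hC s hs) (exp_pos _).le

theorem abs_le_mul_exp_of_abs_sub_le {f : ℝ → ℝ} {a C ν : ℝ} (hν : 0 ≤ ν)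
    (h : ∀ s ≥ 0, |f s - a * exp (-ν * s)| ≤ C * exp (-2 * ν * s)) :
    ∀ s ≥ 0, |f s| ≤ (|a| + C) * exp (-ν * s) := by
  intro s hs
  have hC : 0 ≤ C := by simpa using (abs_nonneg _).trans (h 0 le_rfl)
  have hexp : exp (-2 * ν * s) ≤ exp (-ν * s) := exp_le_exp.2 (by nlinarith)
  have := abs_sub_abs_le_abs_sub (f s) (a * exp (-ν * s))
  rw [abs_mul, abs_of_pos (exp_pos _)] at this
  nlinarith [h s hs, mul_le_mul_of_nonneg_left hexp hC]

-- Left eigenvectors of `M`, normalized so that `(1 - 2μ) v = pcoord v • p + qcoord v • q`.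
noncomputable def pcoord (μ : ℝ) : EuclideanSpace ℝ (Fin 2) →L[ℝ] ℝ :=
  (1 - μ) • EuclideanSpace.proj 0 + EuclideanSpace.proj 1

noncomputable def qcoord (μ : ℝ) : EuclideanSpace ℝ (Fin 2) →L[ℝ] ℝ :=
  -μ • EuclideanSpace.proj 0 - EuclideanSpace.proj 1

theorem pcoord_apply (μ : ℝ) (v : EuclideanSpace ℝ (Fin 2)) :
    pcoord μ v = (1 - μ) * v 0 + v 1 := rfl

theorem qcoord_apply (μ : ℝ) (v : EuclideanSpace ℝ (Fin 2)) :
    qcoord μ v = -μ * v 0 - v 1 := rfl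

theorem pcoord_Mmul (μ : ℝ) (v : EuclideanSpace ℝ (Fin 2)) :
    pcoord μ (Mmul μ v) = -(1 + μ) * pcoord μ v := by
  simp [Mmul, pcoord_apply]; ring

theorem qcoord_Mmul (μ : ℝ) (v : EuclideanSpace ℝ (Fin 2)) :
    qcoord μ (Mmul μ v) = (μ - 2) * qcoord μ v := by
  simp [Mmul, qcoord_apply]; ring

theorem smul_eq_pcoord_smul_pvec_add_qcoord_smul_qvec (μ : ℝ)
    (v : EuclideanSpace ℝ (Fin 2)) :
    (1 - 2 * μ) • v = pcoord μ v • pvec μ + qcoord μ v • qvec μ := by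
  ext i; fin_cases i <;> simp [pvec, qvec, pcoord_apply, qcoord_apply] <;> ring

theorem pcoord_pos_of_trapped {μ : ℝ} (hμ : μ < 1 / 2) {v : EuclideanSpace ℝ (Fin 2)}
    (hv₁ : v 1 < 0) (hv₀ : v 1 > -(v 0) / 2) : 0 < pcoord μ v := by
  rw [pcoord_apply]; nlinarith

theorem norm_le_pcoord_of_trapped {μ : ℝ} (hμ : μ < 1 / 2) {v : EuclideanSpace ℝ (Fin 2)}
    (hv₁ : v 1 < 0) (hv₀ : v 1 > -(v 0) / 2) : ‖v‖ ≤ 3 / (1 - 2 * μ) * pcoord μ v := by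
  have hnorm : ‖v‖ ≤ v 0 - v 1 := by
    rw [EuclideanSpace.norm_eq, Fin.sum_univ_two, Real.sqrt_le_left (by linarith)]
    simp only [Real.norm_eq_abs, sq_abs]
    nlinarith
  rw [div_mul_eq_mul_div, le_div_iff₀ (by linarith), pcoord_apply]
  nlinarith

theorem norm_sub_smul_pvec_sub_smul_qvec_le {μ : ℝ} (hμ : μ < 1 / 2)
    {v : EuclideanSpace ℝ (Fin 2)} {x y εp εq : ℝ} (hx : |pcoord μ v - x| ≤ εp)
    (hy : |qcoord μ v - y| ≤ εq) :
    ‖v - (x / (1 - 2 * μ)) • pvec μ - (y / (1 - 2 * μ)) • qvec μ‖ ≤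
      (εp * ‖pvec μ‖ + εq * ‖qvec μ‖) / (1 - 2 * μ) := by
  have hδ : 0 < 1 - 2 * μ := by linarith
  have hdecomp :
      (1 - 2 * μ) • (v - (x / (1 - 2 * μ)) • pvec μ - (y / (1 - 2 * μ)) • qvec μ) =
      (pcoord μ v - x) • pvec μ + (qcoord μ v - y) • qvec μ := by
    rw [smul_sub, smul_sub, smul_eq_pcoord_smul_pvec_add_qcoord_smul_qvec, smul_smul,
      smul_smul, mul_div_cancel₀ _ hδ.ne', mul_div_cancel₀ _ hδ.ne']
    module
  rw [le_div_iff₀ hδ]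
  calc ‖v - (x / (1 - 2 * μ)) • pvec μ - (y / (1 - 2 * μ)) • qvec μ‖ * (1 - 2 * μ)
      = ‖(pcoord μ v - x) • pvec μ + (qcoord μ v - y) • qvec μ‖ := by
        rw [← hdecomp, norm_smul, Real.norm_of_nonneg hδ.le, mul_comm]
    _ ≤ |pcoord μ v - x| * ‖pvec μ‖ + |qcoord μ v - y| * ‖qvec μ‖ := by
        simpa only [norm_smul, Real.norm_eq_abs] using
          norm_add_le ((pcoord μ v - x) • pvec μ) ((qcoord μ v - y) • qvec μ)
    _ ≤ εp * ‖pvec μ‖ + εq * ‖qvec μ‖ := by gcongr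

theorem abs_map_sub_Mmul_le_of_trapped {μ K : ℝ} (hμ : μ < 1 / 2) (hK : 0 ≤ K)
    (φ : EuclideanSpace ℝ (Fin 2) →L[ℝ] ℝ) {v w : EuclideanSpace ℝ (Fin 2)}
    (hv₁ : v 1 < 0) (hv₀ : v 1 > -(v 0) / 2) (hw : ‖w - Mmul μ v‖ ≤ K * ‖v‖ ^ 2) :
    |φ (w - Mmul μ v)| ≤ ‖φ‖ * (K * (3 / (1 - 2 * μ)) ^ 2) * pcoord μ v ^ 2 := by
  have hv := norm_le_pcoord_of_trapped hμ hv₁ hv₀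
  calc |φ (w - Mmul μ v)| ≤ ‖φ‖ * (K * ‖v‖ ^ 2) :=
        (φ.le_opNorm _).trans (mul_le_mul_of_nonneg_left hw (norm_nonneg _))
    _ ≤ ‖φ‖ * (K * (3 / (1 - 2 * μ) * pcoord μ v) ^ 2) := by gcongr
    _ = ‖φ‖ * (K * (3 / (1 - 2 * μ)) ^ 2) * pcoord μ v ^ 2 := by ring

section TrappedSolution

variable {μ K : ℝ} {Y Y' : ℝ → EuclideanSpace ℝ (Fin 2)}

theorem exists_pos_pcoord_asymptotics (hμ : 0 < μ) (hμ' : μ < 1 / 2) (hK : 0 ≤ K)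
    (hY : ∀ s ≥ 0, HasDerivWithinAt Y (Y' s) (Ici 0) s)
    (hY_ode : ∀ s ≥ 0, ‖Y' s - Mmul μ (Y s)‖ ≤ K * ‖Y s‖ ^ 2)
    (hY_lim : Tendsto (fun s => ‖Y s‖) atTop (𝓝 0))
    (hY_neg : ∀ s ≥ 0, Y s 1 < 0) (hY_trap : ∀ s ≥ 0, Y s 1 > -(Y s 0) / 2) :
    ∃ a C, 0 < a ∧ ∀ s ≥ 0,
      |pcoord μ (Y s) - a * exp (-(1 + μ) * s)| ≤ C * exp (-2 * (1 + μ) * s) := by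
  have hlim : Tendsto (fun s => pcoord μ (Y s)) atTop (𝓝 0) := by
    simpa only [map_zero, Function.comp_def] using ((pcoord μ).continuous.tendsto 0).comp
      (tendsto_zero_iff_norm_tendsto_zero.2 hY_lim)
  refine exists_pos_abs_sub_mul_exp_le_of_abs_deriv_add_le_sq
    (L := ‖pcoord μ‖ * (K * (3 / (1 - 2 * μ)) ^ 2)) (by linarith)
    (fun s hs => (pcoord μ).hasFDerivAt.comp_hasDerivWithinAt s (hY s hs))
    (fun s hs => pcoord_pos_of_trapped hμ' (hY_neg s hs) (hY_trap s hs)) hlim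
    fun s hs => ?_
  rw [show pcoord μ (Y' s) + (1 + μ) * pcoord μ (Y s) = pcoord μ (Y' s - Mmul μ (Y s)) by
    rw [map_sub, pcoord_Mmul]; ring]
  exact abs_map_sub_Mmul_le_of_trapped hμ' hK _ (hY_neg s hs) (hY_trap s hs) (hY_ode s hs)

theorem exists_qcoord_asymptotics (hμ : 0 < μ) (hμ' : μ < 1 / 2) (hK : 0 ≤ K)
    (hY : ∀ s ≥ 0, HasDerivWithinAt Y (Y' s) (Ici 0) s)
    (hY_ode : ∀ s ≥ 0, ‖Y' s - Mmul μ (Y s)‖ ≤ K * ‖Y s‖ ^ 2)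
    (hY_neg : ∀ s ≥ 0, Y s 1 < 0) (hY_trap : ∀ s ≥ 0, Y s 1 > -(Y s 0) / 2) {A : ℝ}
    (hα : ∀ s ≥ 0, |pcoord μ (Y s)| ≤ A * exp (-(1 + μ) * s)) :
    ∃ b B, ∀ s ≥ 0,
      |qcoord μ (Y s) - b * exp ((μ - 2) * s)| ≤ B * exp (-2 * (1 + μ) * s) := by
  obtain ⟨b, hb⟩ := exists_abs_sub_mul_exp_le_of_abs_deriv_sub_le (r := μ - 2)
    (κ := 2 * (1 + μ)) (A := ‖qcoord μ‖ * (K * (3 / (1 - 2 * μ)) ^ 2) * A ^ 2) (by linarith)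
    (fun s hs => (qcoord μ).hasFDerivAt.comp_hasDerivWithinAt s (hY s hs)) fun s hs => by
      calc |qcoord μ (Y' s) - (μ - 2) * qcoord μ (Y s)|
          = |qcoord μ (Y' s - Mmul μ (Y s))| := by rw [map_sub, qcoord_Mmul]
        _ ≤ ‖qcoord μ‖ * (K * (3 / (1 - 2 * μ)) ^ 2) * pcoord μ (Y s) ^ 2 :=
            abs_map_sub_Mmul_le_of_trapped hμ' hK _ (hY_neg s hs) (hY_trap s hs) (hY_ode s hs)
        _ ≤ ‖qcoord μ‖ * (K * (3 / (1 - 2 * μ)) ^ 2) * (A * exp (-(1 + μ) * s)) ^ 2 := by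
            rw [← sq_abs (pcoord μ (Y s))]
            gcongr
            exact hα s hs
        _ = ‖qcoord μ‖ * (K * (3 / (1 - 2 * μ)) ^ 2) * A ^ 2 * exp (-(2 * (1 + μ)) * s) := by
            rw [mul_pow, ← exp_nat_mul]; ring_nf
  simp only [neg_mul_eq_neg_mul] at hb
  exact ⟨b, _, hb⟩

end TrappedSolution

theorem ode_leading_coefficient_positive_general (μ : ℝ) (hμ : 0 < μ) (hμ' : μ < 1 / 2)
    (Y : ℝ → EuclideanSpace ℝ (Fin 2))
    (hY_C1 : ContDiffOn ℝ 1 Y (Set.Ici 0))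
    (hY_lim : Filter.Tendsto (fun s => ‖Y s‖) Filter.atTop (𝓝 0))
    (K : ℝ) (hK : 0 < K)
    (hY_ode : ∀ s : ℝ, 0 ≤ s →
      ‖derivWithin Y (Set.Ici 0) s - Mmul μ (Y s)‖ ≤ K * ‖Y s‖ ^ 2)
    (hY2_neg : ∀ s : ℝ, 0 ≤ s → Y s 1 < 0)
    (hY2_trap : ∀ s : ℝ, 0 ≤ s → Y s 1 > -(Y s 0) / 2) :
    ∃ (a b C : ℝ), 0 < C ∧ 0 < a ∧ ∀ s : ℝ, 0 ≤ s →
      ‖Y s - Real.exp (-(1 + μ) * s) • (a • pvec μ) -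
          Real.exp ((μ - 2) * s) • (b • qvec μ)‖ ≤
        C * Real.exp (-2 * (1 + μ) * s) := by
  have hY (s : ℝ) (hs : s ≥ 0) : HasDerivWithinAt Y (derivWithin Y (Ici 0) s) (Ici 0) s :=
    ((hY_C1.differentiableOn one_ne_zero) s hs).hasDerivWithinAt
  obtain ⟨a, Cp, ha, hα⟩ :=
    exists_pos_pcoord_asymptotics hμ hμ' hK.le hY hY_ode hY_lim hY2_neg hY2_trap
  obtain ⟨b, Cq, hβ⟩ := exists_qcoord_asymptotics hμ hμ' hK.le hY hY_ode hY2_neg hY2_trap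
    (abs_le_mul_exp_of_abs_sub_le (by linarith) hα)
  set δ := 1 - 2 * μ
  refine ⟨a / δ, b / δ, max ((Cp * ‖pvec μ‖ + Cq * ‖qvec μ‖) / δ) 1,
    lt_max_of_lt_right one_pos, div_pos ha (by linarith), fun s hs => ?_⟩
  rw [smul_smul, smul_smul, mul_div_assoc', mul_div_assoc', mul_comm (exp _) a,
    mul_comm (exp _) b]
  calc _ ≤ (Cp * exp (-2 * (1 + μ) * s) * ‖pvec μ‖ +
          Cq * exp (-2 * (1 + μ) * s) * ‖qvec μ‖) / δ :=
        norm_sub_smul_pvec_sub_smul_qvec_le hμ' (hα s hs) (hβ s hs)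
    _ = (Cp * ‖pvec μ‖ + Cq * ‖qvec μ‖) / δ * exp (-2 * (1 + μ) * s) := by ring
    _ ≤ _ := by gcongr; exact le_max_left _ _

/-- Under the additional trapping hypotheses `Y₂ < 0` and `Y₂ > -Y₁/2`
(i.e. the orbit `(1,1) + Y` stays in `{0 < z < 1} ∩ {z > 3/2 - w/2}`), the leading
coefficient `a` in the asymptotic expansion
`|Y(s) - a·e^(-(1+μ)s)·p - b·e^((μ-2)s)·q| ≤ C·e^(-2(1+μ)s)` is strictly positive. -/
theorem ode_leading_coefficient_positive (μ : ℝ) (hμ : 0 < μ) (hμ' : μ < 1 / 2)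
    (Y : ℝ → EuclideanSpace ℝ (Fin 2))
    (hY_C1 : ContDiffOn ℝ 1 Y (Set.Ici 0))
    (hY_ne : ∀ s : ℝ, 0 ≤ s → Y s ≠ 0)
    (hY_lim : Filter.Tendsto (fun s => ‖Y s‖) Filter.atTop (𝓝 0))
    (K : ℝ) (hK : 0 < K)
    (hY_ode : ∀ s : ℝ, 0 ≤ s →
      ‖derivWithin Y (Set.Ici 0) s - Mmul μ (Y s)‖ ≤ K * ‖Y s‖ ^ 2)
    (hY2_neg : ∀ s : ℝ, 0 ≤ s → Y s 1 < 0)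
    (hY2_trap : ∀ s : ℝ, 0 ≤ s → Y s 1 > -(Y s 0) / 2) :
    ∃ (a b C : ℝ), 0 < C ∧ 0 < a ∧ ∀ s : ℝ, 0 ≤ s →
      ‖Y s - Real.exp (-(1 + μ) * s) • (a • pvec μ) -
          Real.exp ((μ - 2) * s) • (b • qvec μ)‖ ≤
        C * Real.exp (-2 * (1 + μ) * s) :=
  ode_leading_coefficient_positive_general μ hμ hμ' Y hY_C1 hY_lim K hK hY_ode hY2_neg hY2_trap
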